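/- Let φ(x) = x(x+1)(2x+1)/6 and ψ(x) = x(x+1)/2, both strictly increasing bijections from [0,∞) onto itself. Given A, B > 0 with φ(ψ⁻¹(B)) ≤ A, there exists a unique pair (x̂, ŷ) ∈ [0,∞)² with ŷ ≥ x̂ such that φ(x̂) + φ(ŷ) = A and ψ(ŷ) − ψ(x̂) = B. -/

import Mathlib

/-!
Writing `psiRoot y = (√(8y + 1) - 1) / 2` for the inverse of `psi` on `[0, ∞)`, the condition
`psi y - psi x = B` with `x, y ≥ 0` forces `y = psiRoot (psi x + B)` (and then `x ≤ y`), so the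
problem reduces to solving `phi x + phi (psiRoot (psi x + B)) = A` for `x ≥ 0`. The left side is
continuous and strictly increasing in `x`, equals `phi (psiRoot B) ≤ A` at `x = 0` and exceeds
`A` at `x = A + 1`; the intermediate value theorem gives the root, monotonicity its uniqueness.
-/

open Set

noncomputable def phi (x : ℝ) : ℝ := x * (x + 1) * (2 * x + 1) / 6
noncomputable def psi (x : ℝ) : ℝ := x * (x + 1) / 2

@[fun_prop]
lemma continuous_phi : Continuous phi := by
  unfold phi; fun_prop

@[fun_prop]
lemma continuous_psi : Continuous psi := by
  unfold psi; fun_prop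

lemma phi_zero : phi 0 = 0 := by
  simp [phi]

lemma psi_zero : psi 0 = 0 := by
  simp [psi]

lemma phi_nonneg {x : ℝ} (hx : 0 ≤ x) : 0 ≤ phi x := by
  unfold phi; positivity

lemma psi_nonneg {x : ℝ} (hx : 0 ≤ x) : 0 ≤ psi x := by
  unfold psi; positivity

lemma self_le_phi {x : ℝ} (hx : 1 ≤ x) : x ≤ phi x := by
  unfold phi
  nlinarith [mul_nonneg (by linarith : 0 ≤ x) (by nlinarith : 0 ≤ (x + 1) * (2 * x + 1) - 6)]

lemma phi_strictMonoOn : StrictMonoOn phi (Ici 0) := by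
  intro a ha b _ hab
  simp only [mem_Ici] at ha
  unfold phi
  nlinarith [mul_pos (sub_pos.2 hab) (sub_pos.2 hab), mul_nonneg ha ha,
    mul_nonneg (sub_pos.2 hab).le (mul_nonneg ha ha)]

lemma psi_strictMonoOn : StrictMonoOn psi (Ici 0) := by
  intro a ha b _ hab
  simp only [mem_Ici] at ha
  unfold psi; nlinarith

noncomputable def psiRoot (y : ℝ) : ℝ := (√(8 * y + 1) - 1) / 2

@[fun_prop]
lemma continuous_psiRoot : Continuous psiRoot := by
  unfold psiRoot; fun_prop

lemma psiRoot_nonneg {y : ℝ} (hy : 0 ≤ y) : 0 ≤ psiRoot y := by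
  have : 1 ≤ √(8 * y + 1) := Real.one_le_sqrt.2 (by linarith)
  unfold psiRoot; linarith

lemma psiRoot_strictMonoOn : StrictMonoOn psiRoot (Ici (-1 / 8)) := by
  intro a ha b _ hab
  simp only [mem_Ici] at ha
  have := Real.sqrt_lt_sqrt (by linarith) (by linarith : 8 * a + 1 < 8 * b + 1)
  unfold psiRoot; linarith

lemma psi_psiRoot {y : ℝ} (hy : -1 / 8 ≤ y) : psi (psiRoot y) = y := by
  have := Real.sq_sqrt (by linarith : 0 ≤ 8 * y + 1)
  unfold psi psiRoot; linear_combination this / 8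

lemma psiRoot_psi {x : ℝ} (hx : -1 / 2 ≤ x) : psiRoot (psi x) = x := by
  have : 8 * psi x + 1 = (2 * x + 1) ^ 2 := by unfold psi; ring
  rw [psiRoot, this, Real.sqrt_sq (by linarith)]
  ring

noncomputable def phiPairSum (B x : ℝ) : ℝ := phi x + phi (psiRoot (psi x + B))

lemma continuous_phiPairSum (B : ℝ) : Continuous (phiPairSum B) := by
  unfold phiPairSum; fun_prop

lemma phiPairSum_zero (B : ℝ) : phiPairSum B 0 = phi (psiRoot B) := by
  simp [phiPairSum, phi_zero, psi_zero]

lemma strictMonoOn_phiPairSum {B : ℝ} (hB : 0 ≤ B) : StrictMonoOn (phiPairSum B) (Ici 0) := by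
  intro a ha b hb hab
  have hpsi := psi_strictMonoOn ha hb hab
  have hpsi_a := psi_nonneg (mem_Ici.1 ha)
  have hroot : psiRoot (psi a + B) < psiRoot (psi b + B) :=
    psiRoot_strictMonoOn (by simp only [mem_Ici]; linarith)
      (by simp only [mem_Ici]; linarith) (by linarith)
  have := phi_strictMonoOn ha hb hab
  have := phi_strictMonoOn (psiRoot_nonneg (by linarith)) (psiRoot_nonneg (by linarith)) hroot
  unfold phiPairSum; linarith

lemma exists_phiPairSum_eq {A B : ℝ} (hB : 0 ≤ B) (hA : phi (psiRoot B) ≤ A) :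
    ∃ x, 0 ≤ x ∧ phiPairSum B x = A := by
  have hA₀ : 0 ≤ A := (phi_nonneg (psiRoot_nonneg hB)).trans hA
  have hlow : phiPairSum B 0 ≤ A := by rwa [phiPairSum_zero]
  have hhigh : A ≤ phiPairSum B (A + 1) := by
    have := self_le_phi (by linarith : 1 ≤ A + 1)
    have := phi_nonneg (psiRoot_nonneg (add_nonneg (psi_nonneg (by linarith : 0 ≤ A + 1)) hB))
    unfold phiPairSum; linarith
  obtain ⟨x, hx, hxA⟩ := intermediate_value_Icc (by linarith : (0 : ℝ) ≤ A + 1)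
    (continuous_phiPairSum B).continuousOn ⟨hlow, hhigh⟩
  exact ⟨x, hx.1, hxA⟩

lemma pair_conditions_iff {A B x y : ℝ} (hB : 0 ≤ B) :
    (0 ≤ x ∧ 0 ≤ y ∧ x ≤ y ∧ phi x + phi y = A ∧ psi y - psi x = B) ↔
      (0 ≤ x ∧ y = psiRoot (psi x + B) ∧ phiPairSum B x = A) := by
  constructor
  · rintro ⟨hx, hy, -, hsum, hdiff⟩
    have hy_eq : y = psiRoot (psi x + B) := by
      rw [← psiRoot_psi (by linarith : -1 / 2 ≤ y)]
      congr 1; linarith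
    exact ⟨hx, hy_eq, by rw [phiPairSum, ← hy_eq, hsum]⟩
  · rintro ⟨hx, rfl, hsum⟩
    have hpsi_x := psi_nonneg hx
    have hy := psiRoot_nonneg (add_nonneg hpsi_x hB)
    have hdiff := psi_psiRoot (by linarith : -1 / 8 ≤ psi x + B)
    exact ⟨hx, hy, (psi_strictMonoOn.le_iff_le hx hy).1 (by linarith), hsum, by linarith⟩

theorem exists_unique_pair_general (A B : ℝ) (hB : 0 < B)
    (psiInv : ℝ → ℝ)
    (hpsiInv : ∀ y : ℝ, 0 ≤ y → 0 ≤ psiInv y ∧ psi (psiInv y) = y)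
    (hcond : phi (psiInv B) ≤ A) :
    ∃! p : ℝ × ℝ, 0 ≤ p.1 ∧ 0 ≤ p.2 ∧ p.1 ≤ p.2 ∧
      phi p.1 + phi p.2 = A ∧ psi p.2 - psi p.1 = B := by
  have hInv : psiInv B = psiRoot B := by
    obtain ⟨hnonneg, hpsi⟩ := hpsiInv B hB.le
    calc psiInv B = psiRoot (psi (psiInv B)) := (psiRoot_psi (by linarith)).symm
      _ = psiRoot B := by rw [hpsi]
  obtain ⟨x, hx, hxA⟩ := exists_phiPairSum_eq hB.le (hInv ▸ hcond)
  refine ⟨(x, psiRoot (psi x + B)), (pair_conditions_iff hB.le).2 ⟨hx, rfl, hxA⟩, ?_⟩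
  rintro ⟨x', y'⟩ h
  obtain ⟨hx', rfl, hx'A⟩ := (pair_conditions_iff (A := A) (x := x') (y := y') hB.le).1 h
  obtain rfl : x' = x := (strictMonoOn_phiPairSum hB.le).injOn hx' hx (hx'A.trans hxA.symm)
  rfl

theorem exists_unique_pair (A B : ℝ) (hA : 0 < A) (hB : 0 < B)
    (psiInv : ℝ → ℝ)
    (hpsiInv : ∀ y : ℝ, 0 ≤ y → 0 ≤ psiInv y ∧ psi (psiInv y) = y)
    (hcond : phi (psiInv B) ≤ A) :
    ∃! p : ℝ × ℝ, 0 ≤ p.1 ∧ 0 ≤ p.2 ∧ p.1 ≤ p.2 ∧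
      phi p.1 + phi p.2 = A ∧ psi p.2 - psi p.1 = B :=
  exists_unique_pair_general A B hB psiInv hpsiInv hcond
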